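/- Let V, A_1,…,A_m, c, n, H, Ric be as in the setting, with n ≥ 4. Assume Ric(X) > (n(n−1)/(n+2))(c+H²) for every unit vector X ∈ V. Then for every orthonormal basis e_1,…,e_n of V, Σ_{j=2}^n (2·Σ_{α=1}^m ⟨A_α e_1, e_j⟩² − Σ_{α=1}^m ⟨A_α e_1, e_1⟩⟨A_α e_j, e_j⟩) < (n−1)c. (Strict pointwise estimate in the proof of Lemma 3.) -/

import Mathlib

/-!
Write `Q = Σ_α Σ_{j ≥ 2} ⟨A_α e_1, e_j⟩²` and `K = n(n-1)/(n+2) (c + H²)`. The left-hand side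
equals `(n-1)c + Q - Ric(e_1)`, so it suffices that `Q < K`. Summing `Ric(e_j) > K` over the frame
gives `S < n(n-1)c + n²H² - nK`, while `S ≥ 2Q + nH²`: by symmetry the off-diagonal part of the first
row of each `A_α` is counted twice in `S`, and Cauchy–Schwarz bounds the diagonal part by `(tr A_α)²/n`.
Since `(n+2)K = n(n-1)(c+H²)`, these combine to `2Q < 2K`.
-/

open scoped RealInnerProductSpace

/-- The Ricci curvature at a point of a submanifold, expressed through the shape
operators `A_α` via the Gauss equation: for a unit vector `X`,
`Ric X = (n-1)c + Σ_α tr(A_α)⟨A_α X, X⟩ − Σ_α ‖A_α X‖²`. -/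
noncomputable def RicCurv {V : Type*} [NormedAddCommGroup V] [InnerProductSpace ℝ V]
    (m n : ℕ) (c : ℝ) (A : Fin m → V →ₗ[ℝ] V) (X : V) : ℝ :=
  ((n : ℝ) - 1) * c + (∑ α : Fin m, LinearMap.trace ℝ V (A α) * ⟪(A α) X, X⟫)
    - ∑ α : Fin m, ‖(A α) X‖ ^ 2

/-- The Lawson–Simons quantity `Θ_p` associated to an orthonormal basis
`e_1, …, e_n` and an integer `p`:
`Θ_p = Σ_{i≤p} Σ_{j>p} (2 Σ_α ⟨A_α e_i, e_j⟩² − Σ_α ⟨A_α e_i, e_i⟩⟨A_α e_j, e_j⟩)`. -/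
noncomputable def Theta {V : Type*} [NormedAddCommGroup V] [InnerProductSpace ℝ V]
    (m : ℕ) {n : ℕ} (p : ℕ) (A : Fin m → V →ₗ[ℝ] V)
    (e : OrthonormalBasis (Fin n) ℝ V) : ℝ :=
  ∑ i ∈ Finset.univ.filter (fun i : Fin n => (i : ℕ) < p),
    ∑ j ∈ Finset.univ.filter (fun j : Fin n => p ≤ (j : ℕ)),
      (2 * ∑ α : Fin m, ⟪(A α) (e i), e j⟫ ^ 2
        - ∑ α : Fin m, ⟪(A α) (e i), e i⟫ * ⟪(A α) (e j), e j⟫)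

/-- The quantity `T_p = Σ_α (tr A_α) Σ_{i≤p} ⟨A_α e_i, e_i⟩`. -/
noncomputable def Tsum {V : Type*} [NormedAddCommGroup V] [InnerProductSpace ℝ V]
    (m : ℕ) {n : ℕ} (p : ℕ) (A : Fin m → V →ₗ[ℝ] V)
    (e : OrthonormalBasis (Fin n) ℝ V) : ℝ :=
  ∑ α : Fin m, LinearMap.trace ℝ V (A α) *
    ∑ i ∈ Finset.univ.filter (fun i : Fin n => (i : ℕ) < p), ⟪(A α) (e i), e i⟫

/-- The squared length `S = Σ_α tr(A_α²)` of the second fundamental form. -/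
noncomputable def Ssec {V : Type*} [NormedAddCommGroup V] [InnerProductSpace ℝ V]
    (m : ℕ) (A : Fin m → V →ₗ[ℝ] V) : ℝ :=
  ∑ α : Fin m, LinearMap.trace ℝ V (A α ∘ₗ A α)

open Finset

section FrameComputation

variable {ι κ : Type*} [Fintype ι] [Fintype κ]

/-- The Gauss-equation Ricci curvature in the direction `e_j`, where `M α i j = ⟨A_α e_i, e_j⟩`. -/
noncomputable def frameRicci (c : ℝ) (M : κ → Matrix ι ι ℝ) (j : ι) : ℝ :=
  ((Fintype.card ι : ℝ) - 1) * c + ∑ α, (M α).trace * M α j j - ∑ α, ∑ k, M α j k ^ 2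

theorem sum_frameRicci (c : ℝ) (M : κ → Matrix ι ι ℝ) :
    ∑ j, frameRicci c M j = (Fintype.card ι : ℝ) * ((Fintype.card ι : ℝ) - 1) * c
      + ∑ α, (M α).trace ^ 2 - ∑ α, ∑ i, ∑ j, M α i j ^ 2 := by
  have htrace : ∑ j, ∑ α, (M α).trace * M α j j = ∑ α, (M α).trace ^ 2 := by
    rw [sum_comm]
    simp only [← mul_sum, sq, Matrix.trace, Matrix.diag]
  have hsq : ∑ j, ∑ α, ∑ k, M α j k ^ 2 = ∑ α, ∑ i, ∑ j, M α i j ^ 2 := sum_comm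
  simp only [frameRicci, sum_sub_distrib, sum_add_distrib, sum_const, card_univ, nsmul_eq_mul,
    htrace, hsq]
  ring

variable [DecidableEq ι]

theorem two_mul_sum_sq_row_le {M : Matrix ι ι ℝ} (hM : M.IsSymm) (i₀ : ι) :
    2 * ∑ j ∈ univ.erase i₀, M i₀ j ^ 2 ≤ ∑ i, ∑ j ∈ univ.erase i, M i j ^ 2 := by
  rw [← add_sum_erase univ _ (mem_univ i₀), two_mul]
  gcongr with j hj
  rw [← hM.apply]
  exact single_le_sum (fun _ _ => sq_nonneg _) (mem_erase.2 ⟨(ne_of_mem_erase hj).symm, mem_univ _⟩)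

theorem two_mul_sum_sq_row_add_sq_trace_div_le {M : Matrix ι ι ℝ} (hM : M.IsSymm) (i₀ : ι) :
    2 * ∑ j ∈ univ.erase i₀, M i₀ j ^ 2 + M.trace ^ 2 / Fintype.card ι
      ≤ ∑ i, ∑ j, M i j ^ 2 := by
  have hdiag : M.trace ^ 2 / Fintype.card ι ≤ ∑ i, M i i ^ 2 :=
    div_le_of_le_mul₀ (by positivity) (by positivity) (by
      rw [mul_comm]
      exact sq_sum_le_card_mul_sum_sq (s := univ) (f := fun i => M i i))
  have hsplit : ∑ i, ∑ j, M i j ^ 2 = ∑ i, M i i ^ 2 + ∑ i, ∑ j ∈ univ.erase i, M i j ^ 2 := by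
    rw [← sum_add_distrib]
    exact sum_congr rfl fun i _ => (add_sum_erase univ _ (mem_univ i)).symm
  linarith [two_mul_sum_sq_row_le hM i₀]

theorem sum_erase_eq_sub_frameRicci (c : ℝ) (M : κ → Matrix ι ι ℝ) (i₀ : ι) :
    ∑ j ∈ univ.erase i₀, (2 * ∑ α, M α i₀ j ^ 2 - ∑ α, M α i₀ i₀ * M α j j)
      = ((Fintype.card ι : ℝ) - 1) * c + ∑ α, ∑ j ∈ univ.erase i₀, M α i₀ j ^ 2
        - frameRicci c M i₀ := by
  have htrace (α : κ) : (M α).trace = M α i₀ i₀ + ∑ j ∈ univ.erase i₀, M α j j :=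
    (add_sum_erase univ (fun j => M α j j) (mem_univ i₀)).symm
  have hrow (α : κ) : ∑ k, M α i₀ k ^ 2 = M α i₀ i₀ ^ 2 + ∑ j ∈ univ.erase i₀, M α i₀ j ^ 2 :=
    (add_sum_erase univ (fun k => M α i₀ k ^ 2) (mem_univ i₀)).symm
  have hoff : ∑ j ∈ univ.erase i₀, ∑ α, M α i₀ j ^ 2 = ∑ α, ∑ j ∈ univ.erase i₀, M α i₀ j ^ 2 :=
    sum_comm
  have hdiag : ∑ j ∈ univ.erase i₀, ∑ α, M α i₀ i₀ * M α j j
      = ∑ α, (∑ j ∈ univ.erase i₀, M α j j) * M α i₀ i₀ := by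
    rw [sum_comm]
    simp only [mul_sum, mul_comm]
  simp only [frameRicci, htrace, hrow, sum_sub_distrib, ← mul_sum, add_mul, sum_add_distrib,
    hoff, hdiag, ← sq]
  ring

theorem sum_sq_row_lt_of_frameRicci_gt [Nonempty ι] (c H : ℝ) (M : κ → Matrix ι ι ℝ)
    (hM : ∀ α, (M α).IsSymm)
    (hH : (Fintype.card ι : ℝ) ^ 2 * H ^ 2 = ∑ α, (M α).trace ^ 2)
    (hRic : ∀ j, (Fintype.card ι : ℝ) * ((Fintype.card ι : ℝ) - 1) / ((Fintype.card ι : ℝ) + 2)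
      * (c + H ^ 2) < frameRicci c M j) (i₀ : ι) :
    ∑ α, ∑ j ∈ univ.erase i₀, M α i₀ j ^ 2
      < (Fintype.card ι : ℝ) * ((Fintype.card ι : ℝ) - 1) / ((Fintype.card ι : ℝ) + 2)
        * (c + H ^ 2) := by
  set N : ℝ := (Fintype.card ι : ℝ)
  set K := N * (N - 1) / (N + 2) * (c + H ^ 2)
  have hN : 0 < N := by simp [N, Fintype.card_pos]
  have hS : 2 * ∑ α, ∑ j ∈ univ.erase i₀, M α i₀ j ^ 2 + N * H ^ 2
      ≤ ∑ α, ∑ i, ∑ j, M α i j ^ 2 := by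
    have hNH : N * H ^ 2 = ∑ α, (M α).trace ^ 2 / N := by
      rw [← sum_div, ← hH]
      field_simp
    rw [hNH, mul_sum, ← sum_add_distrib]
    exact sum_le_sum fun α _ => two_mul_sum_sq_row_add_sq_trace_div_le (hM α) i₀
  have hscal : N * K < N * (N - 1) * c + N ^ 2 * H ^ 2 - ∑ α, ∑ i, ∑ j, M α i j ^ 2 := by
    rw [hH, ← sum_frameRicci]
    simpa [N] using sum_lt_sum_of_nonempty univ_nonempty fun j _ => hRic j
  have hK : (N + 2) * K = N * (N - 1) * (c + H ^ 2) := by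
    simp only [K]
    field_simp
  linarith

theorem sum_erase_lt_of_frameRicci_gt [Nonempty ι] (c H : ℝ) (M : κ → Matrix ι ι ℝ)
    (hM : ∀ α, (M α).IsSymm)
    (hH : (Fintype.card ι : ℝ) ^ 2 * H ^ 2 = ∑ α, (M α).trace ^ 2)
    (hRic : ∀ j, (Fintype.card ι : ℝ) * ((Fintype.card ι : ℝ) - 1) / ((Fintype.card ι : ℝ) + 2)
      * (c + H ^ 2) < frameRicci c M j) (i₀ : ι) :
    ∑ j ∈ univ.erase i₀, (2 * ∑ α, M α i₀ j ^ 2 - ∑ α, M α i₀ i₀ * M α j j)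
      < ((Fintype.card ι : ℝ) - 1) * c := by
  rw [sum_erase_eq_sub_frameRicci]
  linarith [sum_sq_row_lt_of_frameRicci_gt c H M hM hH hRic i₀, hRic i₀]

end FrameComputation

section ShapeMatrix

variable {V ι : Type*} [NormedAddCommGroup V] [InnerProductSpace ℝ V] [Fintype ι]

noncomputable def shapeMatrix (T : V →ₗ[ℝ] V) (e : OrthonormalBasis ι ℝ V) : Matrix ι ι ℝ :=
  Matrix.of fun i j => ⟪T (e i), e j⟫

theorem trace_shapeMatrix (T : V →ₗ[ℝ] V) (e : OrthonormalBasis ι ℝ V) :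
    (shapeMatrix T e).trace = LinearMap.trace ℝ V T := by
  simp [LinearMap.trace_eq_sum_inner T e, shapeMatrix, Matrix.trace, real_inner_comm]

theorem isSymm_shapeMatrix {T : V →ₗ[ℝ] V} (hT : T.IsSymmetric) (e : OrthonormalBasis ι ℝ V) :
    (shapeMatrix T e).IsSymm :=
  Matrix.IsSymm.ext fun i j => by
    simp only [shapeMatrix, Matrix.of_apply]
    rw [hT, real_inner_comm]

theorem RicCurv_eq_frameRicci {m n : ℕ} (c : ℝ) (A : Fin m → V →ₗ[ℝ] V)
    (e : OrthonormalBasis (Fin n) ℝ V) (j : Fin n) :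
    RicCurv m n c A (e j) = frameRicci c (fun α => shapeMatrix (A α) e) j := by
  simp only [RicCurv, frameRicci, trace_shapeMatrix, Fintype.card_fin]
  simp [shapeMatrix, ← e.sum_sq_inner_left]

end ShapeMatrix

theorem Fin.filter_one_le_eq_erase_zero {n : ℕ} (hn : 0 < n) :
    univ.filter (fun j : Fin n => 1 ≤ (j : ℕ)) = univ.erase ⟨0, hn⟩ := by
  ext j
  simp only [mem_filter, mem_univ, true_and, mem_erase, ne_eq, Fin.ext_iff, and_true]
  omega

theorem lemma_three_estimate_strict {V : Type*} [NormedAddCommGroup V] [InnerProductSpace ℝ V]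
    (n m : ℕ)
    (A : Fin m → V →ₗ[ℝ] V) (hsymm : ∀ α : Fin m, (A α).IsSymmetric)
    (c H : ℝ)
    (hHdef : (n : ℝ) ^ 2 * H ^ 2 = ∑ α : Fin m, (LinearMap.trace ℝ V (A α)) ^ 2)
    (hn : 4 ≤ n)
    (hRic : ∀ X : V, ‖X‖ = 1 →
      RicCurv m n c A X > (n : ℝ) * ((n : ℝ) - 1) / ((n : ℝ) + 2) * (c + H ^ 2)) :
    ∀ e : OrthonormalBasis (Fin n) ℝ V,
      ∑ j ∈ Finset.univ.filter (fun j : Fin n => 1 ≤ (j : ℕ)),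
        (2 * ∑ α : Fin m, ⟪(A α) (e ⟨0, by omega⟩), e j⟫ ^ 2
          - ∑ α : Fin m, ⟪(A α) (e ⟨0, by omega⟩), e ⟨0, by omega⟩⟫ * ⟪(A α) (e j), e j⟫)
      < ((n : ℝ) - 1) * c := by
  intro e
  have hn0 : 0 < n := by omega
  have : Nonempty (Fin n) := ⟨⟨0, hn0⟩⟩
  have key := sum_erase_lt_of_frameRicci_gt c H (fun α => shapeMatrix (A α) e)
    (fun α => isSymm_shapeMatrix (hsymm α) e) (by simpa [trace_shapeMatrix] using hHdef)
    (fun j => by simpa [← RicCurv_eq_frameRicci] using hRic (e j) (e.orthonormal.1 j)) ⟨0, hn0⟩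
  simp only [shapeMatrix, Matrix.of_apply, Fintype.card_fin] at key
  rwa [Fin.filter_one_le_eq_erase_zero hn0]
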